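/- arXiv:2402.08746 — 6 statements merged into one kernel-verified Lean document; each statement's English description precedes it below -/
import Mathlib

section
/- Any strongly group-strategyproof and unanimous multi-winner approval-based voting rule is Pareto-efficient. -/
/-- Hamming distance between finite sets. -/
def hd {A : Type*} [DecidableEq A] (Q T : Finset A) : ℕ :=
  (Q \ T).card + (T \ Q).card

/-- A rule is unanimous if whenever all agents report the same size-`k` set `S`,
the output is `S`. -/
def Unanimous {A ι : Type*} [DecidableEq A] (k : ℕ)
    (R : (ι → Finset A) → Finset A) : Prop :=
  ∀ S : Finset A, S.card = k → R (fun _ => S) = S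

/-- Strong group-strategyproofness: no coalition can misreport so that, measured
from the true ballots, no member is worse off and some member is strictly better off. -/
def StronglyGSP {A ι : Type*} [DecidableEq A] [DecidableEq ι]
    (R : (ι → Finset A) → Finset A) : Prop :=
  ∀ (P P' : ι → Finset A) (S : Finset ι),
    (∀ i, i ∉ S → P' i = P i) →
    ¬ ((∀ i ∈ S, hd (P i) (R P') ≤ hd (P i) (R P)) ∧
       (∃ i ∈ S, hd (P i) (R P') < hd (P i) (R P)))

/-- Pareto-efficiency: no size-`k` committee weakly improves every agent and
strictly improves some agent, compared to the rule's outcome. -/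
def ParetoEfficient {A ι : Type*} [DecidableEq A] (k : ℕ)
    (R : (ι → Finset A) → Finset A) : Prop :=
  ∀ P : ι → Finset A,
    ¬ ∃ K' : Finset A, K'.card = k ∧
      (∀ i, hd (P i) K' ≤ hd (P i) (R P)) ∧
      (∃ i, hd (P i) K' < hd (P i) (R P))

theorem StronglyGSP.not_paretoImproved_by_outcome {A ι : Type*} [DecidableEq A] [Fintype ι]
    [DecidableEq ι] {R : (ι → Finset A) → Finset A} (hGSP : StronglyGSP R)
    (P P' : ι → Finset A) :
    ¬ ((∀ i, hd (P i) (R P') ≤ hd (P i) (R P)) ∧ ∃ i, hd (P i) (R P') < hd (P i) (R P)) :=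
  fun ⟨hle, i, hlt⟩ =>
    hGSP P P' Finset.univ (fun j hj => absurd (Finset.mem_univ j) hj)
      ⟨fun j _ => hle j, i, Finset.mem_univ i, hlt⟩

theorem sgsp_unanimous_implies_pareto_general {A : Type*} [DecidableEq A]
    {n k : ℕ} (R : (Fin n → Finset A) → Finset A)
    (hU : Unanimous k R) (hGSP : StronglyGSP R) :
    ParetoEfficient k R := by
  rintro P ⟨K', hK', hle, hlt⟩
  have hR : R (fun _ => K') = K' := hU K' hK'
  exact hGSP.not_paretoImproved_by_outcome P (fun _ => K') ⟨by rwa [hR], by rwa [hR]⟩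

/-- Any strongly GSP and unanimous multi-winner approval-based voting rule is
Pareto-efficient. -/
theorem sgsp_unanimous_implies_pareto {A : Type*} [Fintype A] [DecidableEq A]
    {n k : ℕ} (R : (Fin n → Finset A) → Finset A)
    (hcard : ∀ P, (R P).card = k)
    (hU : Unanimous k R) (hGSP : StronglyGSP R) :
    ParetoEfficient k R :=
  sgsp_unanimous_implies_pareto_general R hU hGSP
end

section
/- Let R be a Pareto-efficient multi-winner approval-based voting rule for elections with alternative set A' = A ∪ D (D a set of k−1 dummy alternatives disjoint from A) and committees of size k. Consider approval profiles produced from a ranking profile ≻ on A by the construction in which each agent i of the ranking election is replaced by agents (i,1),…,(i,m−1), where |A| = m and agent (i,j) approves the top j alternatives of ≻_i together with all of D. Then the committee R(P(≻)) contains all of D and exactly one alternative of A; i.e., R(P(≻)) \ D is a singleton. -/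
/-- The set of `k-1` dummy alternatives inside `Fin m ⊕ Fin (k-1)`. -/
def dummies (m k : ℕ) : Finset (Fin m ⊕ Fin (k - 1)) :=
  Finset.univ.image Sum.inr

/-- The approval profile constructed from a ranking profile `σ`, where `σ i t`
is the alternative ranked at position `t` by agent `i` (position `0` is the top).
Agent `(i, j)` (for `j : Fin (m-1)`, representing the index `j+1 ∈ [m-1]`)
approves the top `j+1` alternatives of `σ i` together with all dummies. -/
def redProfile {n m k : ℕ} (σ : Fin n → Equiv.Perm (Fin m)) :
    (Fin n × Fin (m - 1)) → Finset (Fin m ⊕ Fin (k - 1)) :=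
  fun p =>
    ((Finset.univ.filter (fun t : Fin m => t.val ≤ p.2.val)).image
        (fun t => Sum.inl (σ p.1 t))) ∪ dummies m k

/-!
Every ballot of `redProfile σ` contains the `k - 1` dummies, and the ballot of agent `(i, 0)`
consists of the dummies and its top alternative `t`. If the outcome `K` missed a dummy, it would
contain at least two real alternatives; replacing `K` by the dummies together with one real
alternative `a ∈ K` (with `a = t` when `t ∈ K`) does not shrink the intersection with any ballot
and strictly enlarges it for agent `(i, 0)`. Between committees of equal size, Hamming distance
is decided by the size of this intersection, so `K` would be Pareto dominated.
-/

open Finset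

section Hamming

variable {A : Type*} [DecidableEq A]

theorem hd_add_two_mul_card_inter (Q T : Finset A) :
    hd Q T + 2 * #(Q ∩ T) = #Q + #T := by
  have hQ := card_sdiff_add_card_inter Q T
  have hT := card_sdiff_add_card_inter T Q
  rw [inter_comm] at hT
  unfold hd
  omega

theorem hd_le_hd_iff_of_card_eq {Q T T' : Finset A} (h : #T = #T') :
    hd Q T ≤ hd Q T' ↔ #(Q ∩ T') ≤ #(Q ∩ T) := by
  have := hd_add_two_mul_card_inter Q T
  have := hd_add_two_mul_card_inter Q T'
  omega

theorem hd_lt_hd_iff_of_card_eq {Q T T' : Finset A} (h : #T = #T') :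
    hd Q T < hd Q T' ↔ #(Q ∩ T') < #(Q ∩ T) := by
  have := hd_add_two_mul_card_inter Q T
  have := hd_add_two_mul_card_inter Q T'
  omega

theorem card_inter_le_card_inter_insert {B D K : Finset A} {a : A} (hDB : D ⊆ B) (haK : a ∈ K)
    (haD : a ∉ D) (hK : #K = #D + 1) : #(B ∩ K) ≤ #(B ∩ insert a D) := by
  by_cases haB : a ∈ B
  · rw [inter_eq_right.2 (insert_subset haB hDB), card_insert_of_notMem haD, ← hK]
    exact card_le_card inter_subset_right
  · have hlt : #(B ∩ K) < #K :=
      card_lt_card ⟨inter_subset_right, fun h => haB (mem_inter.1 (h haK)).1⟩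
    have hD : #D ≤ #(B ∩ insert a D) := card_le_card (subset_inter hDB (subset_insert a D))
    omega

theorem card_inter_lt_card_inter_insert {D K : Finset A} {t a : A} (hDK : ¬ D ⊆ K)
    (hta : t ∈ K → a = t) : #(insert t D ∩ K) < #(insert t D ∩ insert a D) := by
  by_cases htK : t ∈ K
  · rw [hta htK, inter_self]
    refine card_lt_card ⟨inter_subset_left, fun h => hDK ?_⟩
    exact (subset_insert t D).trans (h.trans inter_subset_right)
  · have hsub : insert t D ∩ K ⊂ D := by
      refine ⟨fun x hx => ?_, fun h => hDK (h.trans inter_subset_right)⟩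
      obtain ⟨hxtD, hxK⟩ := mem_inter.1 hx
      exact (mem_insert.1 hxtD).resolve_left (by rintro rfl; exact htK hxK)
    exact (card_lt_card hsub).trans_le
      (card_le_card (subset_inter (subset_insert t D) (subset_insert a D)))

end Hamming

theorem ParetoEfficient.subset_of_forall_subset {A ι : Type*} [DecidableEq A] {k : ℕ}
    {R : (ι → Finset A) → Finset A} (hPE : ParetoEfficient k R) {P : ι → Finset A}
    {D : Finset A} (hK : #(R P) = k) (hD : #D + 1 = k) (hP : ∀ i, D ⊆ P i) {i₀ : ι} {t : A}
    (htD : t ∉ D) (ht : P i₀ = insert t D) : D ⊆ R P := by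
  by_contra hDK
  obtain ⟨a, haK, haD, hta⟩ : ∃ a ∈ R P, a ∉ D ∧ (t ∈ R P → a = t) := by
    by_cases htK : t ∈ R P
    · exact ⟨t, htK, htD, fun _ => rfl⟩
    · obtain ⟨a, ha⟩ : (R P \ D).Nonempty := by
        rw [← card_pos]; have := le_card_sdiff D (R P); omega
      exact ⟨a, (mem_sdiff.1 ha).1, (mem_sdiff.1 ha).2, fun h => absurd h htK⟩
  have hcard : #(insert a D) = #(R P) := by rw [card_insert_of_notMem haD, hD, hK]
  refine hPE P ⟨insert a D, hcard.trans hK, fun i => ?_, i₀, ?_⟩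
  · exact (hd_le_hd_iff_of_card_eq hcard).2
      (card_inter_le_card_inter_insert (hP i) haK haD (hK.trans hD.symm))
  · rw [ht]
    exact (hd_lt_hd_iff_of_card_eq hcard).2 (card_inter_lt_card_inter_insert hDK hta)

theorem card_dummies (m k : ℕ) : #(dummies m k) = k - 1 := by
  rw [dummies, card_image_of_injective _ Sum.inr_injective, card_univ, Fintype.card_fin]

theorem inl_notMem_dummies {m k : ℕ} (a : Fin m) : Sum.inl a ∉ dummies m k := by
  simp [dummies]

theorem redProfile_top {n m k : ℕ} (σ : Fin n → Equiv.Perm (Fin m)) (i : Fin n)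
    (h : 0 < m - 1) :
    redProfile (k := k) σ (i, ⟨0, h⟩) =
      insert (Sum.inl (σ i ⟨0, by omega⟩)) (dummies m k) := by
  rw [redProfile, insert_eq]
  congr
  ext x
  simp only [mem_image, mem_filter, mem_univ, true_and, mem_singleton, Nat.le_zero]
  constructor
  · rintro ⟨t, ht, rfl⟩
    rw [show t = ⟨0, _⟩ from Fin.ext ht]
  · rintro rfl
    exact ⟨_, rfl, rfl⟩

/-- For a Pareto-efficient rule `R` on the constructed approval election, the
outcome on `redProfile σ` contains all dummies together with exactly one real
alternative. -/
theorem reduction_outcome_singleton {n m k : ℕ} (hn : 1 ≤ n) (hm : 2 ≤ m) (hk : 1 ≤ k)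
    (R : ((Fin n × Fin (m - 1)) → Finset (Fin m ⊕ Fin (k - 1))) → Finset (Fin m ⊕ Fin (k - 1)))
    (hcard : ∀ P, (R P).card = k)
    (hPE : ParetoEfficient k R) :
    ∀ σ : Fin n → Equiv.Perm (Fin m),
      ∃ a : Fin m, R (redProfile σ) = insert (Sum.inl a) (dummies m k) := by
  intro σ
  have hD : #(dummies m k) + 1 = k := by rw [card_dummies]; omega
  have hsub : dummies m k ⊆ R (redProfile σ) :=
    hPE.subset_of_forall_subset (hcard _) hD (fun _ => subset_union_right)
      (inl_notMem_dummies _) (redProfile_top σ ⟨0, hn⟩ (by omega))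
  obtain ⟨x, hx, hxR⟩ := exists_eq_insert_iff.2 ⟨hsub, by rw [hD, hcard]⟩
  cases x with
  | inl a => exact ⟨a, hxR.symm⟩
  | inr c => exact absurd (mem_image_of_mem Sum.inr (mem_univ c)) hx
end

section
/- For approval elections with m ≥ 3 alternatives and committee size k ∈ {1,…,m−2}, no multi-winner approval-based voting rule is both strongly group-strategyproof and Pareto-efficient. -/
open Finset Function

section HammingDistance

variable {A : Type*} [DecidableEq A]

theorem hd_insert_of_notMem (Q : Finset A) {T : Finset A} {e : A} (he : e ∉ T) :
    (hd Q (insert e T) : ℤ) = hd Q T + if e ∈ Q then -1 else 1 := by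
  unfold hd
  rw [sdiff_insert]
  by_cases heQ : e ∈ Q
  · rw [insert_sdiff_of_mem _ heQ, card_erase_of_mem (mem_sdiff.2 ⟨heQ, he⟩), if_pos heQ]
    have : 0 < #(Q \ T) := card_pos.2 ⟨e, mem_sdiff.2 ⟨heQ, he⟩⟩
    omega
  · rw [insert_sdiff_of_notMem _ heQ, erase_eq_of_notMem (fun h => heQ (mem_sdiff.1 h).1),
      card_insert_of_notMem (fun h => he (mem_sdiff.1 h).1), if_neg heQ]
    push_cast
    ring

theorem hd_insert_le_hd_insert_iff (Q : Finset A) {M : Finset A} {d e : A} (hdM : d ∉ M)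
    (heM : e ∉ M) : hd Q (insert e M) ≤ hd Q (insert d M) ↔ (d ∈ Q → e ∈ Q) := by
  zify
  rw [hd_insert_of_notMem Q hdM, hd_insert_of_notMem Q heM]
  split_ifs <;> simp_all

theorem hd_insert_lt_hd_insert_iff (Q : Finset A) {M : Finset A} {d e : A} (hdM : d ∉ M)
    (heM : e ∉ M) : hd Q (insert e M) < hd Q (insert d M) ↔ e ∈ Q ∧ d ∉ Q := by
  zify
  rw [hd_insert_of_notMem Q hdM, hd_insert_of_notMem Q heM]
  split_ifs <;> simp_all
  omega

end HammingDistance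

section ParetoEfficient

variable {A ι : Type*} [DecidableEq A] {k : ℕ} {R : (ι → Finset A) → Finset A}

theorem ParetoEfficient.not_exchange_improves (hpe : ParetoEfficient k R)
    (hcard : ∀ P, (R P).card = k) {P : ι → Finset A} {M : Finset A} {d e : A} (hdM : d ∉ M)
    (heM : e ∉ M) (hR : R P = insert d M) :
    ¬ ((∀ i, d ∈ P i → e ∈ P i) ∧ ∃ i, e ∈ P i ∧ d ∉ P i) := by
  rintro ⟨hweak, i, hstrict⟩
  refine hpe P ⟨insert e M, ?_, fun j => ?_, i, ?_⟩
  · rw [card_insert_of_notMem heM, ← hcard P, hR, card_insert_of_notMem hdM]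
  · rw [hR, hd_insert_le_hd_insert_iff _ hdM heM]
    exact hweak j
  · rw [hR, hd_insert_lt_hd_insert_iff _ hdM heM]
    exact hstrict

theorem ParetoEfficient.exists_eq_insert (hpe : ParetoEfficient k R)
    (hcard : ∀ P, (R P).card = k) {P : ι → Finset A} {B : Finset A} (hB : ∀ i, B ⊆ P i)
    (hk : B.card + 1 = k) (hmiss : ∀ d ∉ B, ∃ i, d ∉ P i) (happ : ∃ i, ¬ P i ⊆ B) :
    ∃ x ∉ B, (∃ i, x ∈ P i) ∧ R P = insert x B := by
  have hBK : B ⊆ R P := by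
    intro e heB
    by_contra heK
    obtain ⟨d, hdK, hdB⟩ :=
      exists_mem_notMem_of_card_lt_card (s := B) (t := R P) (by rw [hcard P]; omega)
    obtain ⟨j, hdj⟩ := hmiss d hdB
    exact hpe.not_exchange_improves hcard (notMem_erase d _) (fun h => heK (mem_of_mem_erase h))
      (insert_erase hdK).symm ⟨fun i _ => hB i heB, j, hB j heB, hdj⟩
  obtain ⟨x, hxK, hxB⟩ :=
    exists_mem_notMem_of_card_lt_card (s := B) (t := R P) (by rw [hcard P]; omega)
  have hR : R P = insert x B :=
    (eq_of_subset_of_card_le (insert_subset hxK hBK)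
      (by rw [card_insert_of_notMem hxB, hcard P, hk])).symm
  refine ⟨x, hxB, ?_, hR⟩
  by_contra! hx
  obtain ⟨i, hi⟩ := happ
  obtain ⟨c, hcP, hcB⟩ := not_subset.1 hi
  have hcK : c ∉ insert x B := by
    rintro hc
    rcases mem_insert.1 hc with rfl | hc
    exacts [hx i hcP, hcB hc]
  exact hpe.not_exchange_improves hcard hxB (fun h => hcK (mem_insert_of_mem h)) hR
    ⟨fun j hj => absurd hj (hx j), i, hcP, hx i⟩

end ParetoEfficient

section Cloning

variable {A ι κ : Type*} [DecidableEq A] {R : (ι → Finset A) → Finset A} {π : ι → κ}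

theorem StronglyGSP.comp_surjective [Fintype ι] [DecidableEq ι] [DecidableEq κ]
    (hR : StronglyGSP R) (hπ : Surjective π) : StronglyGSP fun Q : κ → Finset A => R (Q ∘ π) := by
  rintro Q Q' S hQ ⟨hweak, j, hj, hstrict⟩
  obtain ⟨i, rfl⟩ := hπ j
  refine hR (Q ∘ π) (Q' ∘ π) ({i | π i ∈ S} : Finset ι) (fun l hl => hQ _ (by simpa using hl))
    ⟨fun l hl => hweak _ (by simpa using hl), i, by simpa using hj, hstrict⟩

theorem ParetoEfficient.comp_surjective {k : ℕ} (hR : ParetoEfficient k R) (hπ : Surjective π) :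
    ParetoEfficient k fun Q : κ → Finset A => R (Q ∘ π) := by
  rintro Q ⟨K, hK, hweak, j, hstrict⟩
  obtain ⟨i, rfl⟩ := hπ j
  exact hR (Q ∘ π) ⟨K, hK, fun l => hweak (π l), i, hstrict⟩

end Cloning

/-- Approval ballots of three voters over three alternatives. -/
abbrev Profile3 := Fin 3 → Finset (Fin 3)

namespace Profile3

def Admissible (σ : Profile3) : Prop :=
  (∃ v, (σ v).Nonempty) ∧ ∀ x, ∃ v, x ∉ σ v

def ParetoDominates (σ : Profile3) (y x : Fin 3) : Prop :=
  (∀ v, x ∈ σ v → y ∈ σ v) ∧ ∃ v, y ∈ σ v ∧ x ∉ σ v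

/-- Under the true profile `σ` with outcome `x`, the coalition of the voters whose ballot differs in
`σ'`, together with `v₀`, gets `x'` by reporting `σ'`: nobody in it loses and `v₀` gains. -/
def IsManipulation (σ σ' : Profile3) (x x' : Fin 3) : Prop :=
  ∃ v₀, x' ∈ σ v₀ ∧ x ∉ σ v₀ ∧ ∀ v, (σ v ≠ σ' v ∨ v = v₀) → x ∈ σ v → x' ∈ σ v

instance (σ : Profile3) : Decidable σ.Admissible := by unfold Admissible; infer_instance

instance (σ : Profile3) (y x : Fin 3) : Decidable (σ.ParetoDominates y x) := by
  unfold ParetoDominates; infer_instance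

instance (σ σ' : Profile3) (x x' : Fin 3) : Decidable (σ.IsManipulation σ' x x') := by
  unfold IsManipulation; infer_instance

def IsPareto (f : Profile3 → Fin 3) : Prop :=
  ∀ σ : Profile3, σ.Admissible → ∀ y, ¬ σ.ParetoDominates y (f σ)

def IsSGSP (f : Profile3 → Fin 3) : Prop :=
  ∀ σ σ' : Profile3, σ.Admissible → σ'.Admissible → ¬ σ.IsManipulation σ' (f σ) (f σ')

variable {f : Profile3 → Fin 3}

theorem IsPareto.eq_or_eq (hP : IsPareto f) {σ : Profile3} {y z : Fin 3}
    (h : σ.Admissible ∧ ∀ w, w ≠ y → w ≠ z → ∃ u, σ.ParetoDominates u w) :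
    f σ = y ∨ f σ = z := by
  by_contra! hne
  obtain ⟨u, hu⟩ := h.2 _ hne.1 hne.2
  exact hP σ h.1 u hu

theorem eq_of_forced (hP : IsPareto f) (hS : IsSGSP f) {σ σ' : Profile3} {x y : Fin 3}
    (hσ : f σ = x) (h : σ.Admissible ∧ σ'.Admissible ∧ ∀ z ≠ y,
      σ.IsManipulation σ' x z ∨ σ'.IsManipulation σ z x ∨ ∃ u, σ'.ParetoDominates u z) :
    f σ' = y := by
  obtain ⟨hσa, hσ'a, h⟩ := h
  by_contra hne
  subst hσ
  rcases h _ hne with h | h | ⟨u, hu⟩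
  exacts [hS σ σ' hσa hσ'a h, hS σ' σ hσ'a hσa h, hP σ' hσ'a u hu]

theorem false_of_isPareto_of_isSGSP (hP : IsPareto f) (hS : IsSGSP f) : False := by
  -- `0, 1, 2` play the roles of `a, b, c`
  have forced := @eq_of_forced f hP hS
  rcases hP.eq_or_eq (σ := ![{1}, {0}, {0, 1, 2}]) (y := 0) (z := 1) (by decide) with h₀ | h₀
  · have h₁ := forced (σ' := ![{1}, {0, 2}, {2}]) (y := 2) h₀ (by decide)
    have h₂ := forced (σ' := ![{1}, {1, 2}, {2}]) (y := 2) h₁ (by decide)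
    have h₃ := forced (σ' := ![{0, 1}, {1}, {2}]) (y := 2) h₂ (by decide)
    have h₄ := forced (σ' := ![{0, 1}, {0}, {2}]) (y := 2) h₃ (by decide)
    have h₅ := forced (σ' := ![{0, 1}, {0}, {1, 2}]) (y := 1) h₄ (by decide)
    have h₆ := forced (σ' := ![{1}, {0}, {0, 1, 2}]) (y := 1) h₅ (by decide)
    exact absurd (h₀.symm.trans h₆) (by decide)
  · have h₁ := forced (σ' := ![{1}, {0}, {0, 2}]) (y := 1) h₀ (by decide)
    have h₂ := forced (σ' := ![{1}, {1}, {2}]) (y := 1) h₁ (by decide)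
    have h₃ := forced (σ' := ![{0, 1}, {0}, {2}]) (y := 0) h₂ (by decide)
    have h₄ := forced (σ' := ![{1, 2}, {0}, {2}]) (y := 2) h₁ (by decide)
    have h₅ := forced (σ' := ![{0}, {0}, {2}]) (y := 0) h₃ (by decide)
    have h₆ := forced (σ' := ![{0, 2}, {0}, {2}]) (y := 2) h₄ (by decide)
    have h₇ := forced (σ' := ![{0, 2}, {0}, {2}]) (y := 0) h₅ (by decide)
    exact absurd (h₆.symm.trans h₇) (by decide)

end Profile3

section Embedding

variable {A : Type*} [DecidableEq A] {e : Fin 3 ↪ A} {B : Finset A}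

def liftProfile (e : Fin 3 ↪ A) (B : Finset A) (σ : Profile3) : Fin 3 → Finset A :=
  fun v => B ∪ (σ v).map e

theorem apply_mem_liftProfile_iff (heB : ∀ x, e x ∉ B) {σ : Profile3} {v x : Fin 3} :
    e x ∈ liftProfile e B σ v ↔ x ∈ σ v := by
  simp [liftProfile, heB]

variable {k : ℕ} {R : (Fin 3 → Finset A) → Finset A}

theorem ParetoEfficient.exists_eq_insert_liftProfile (hpe : ParetoEfficient k R)
    (hcard : ∀ P, (R P).card = k) (heB : ∀ x, e x ∉ B) (hk : B.card + 1 = k) {σ : Profile3}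
    (hσ : σ.Admissible) : ∃ x, R (liftProfile e B σ) = insert (e x) B := by
  have hmem : ∀ {a v}, a ∈ liftProfile e B σ v ↔ a ∈ B ∨ ∃ x ∈ σ v, e x = a := by
    simp [liftProfile]
  obtain ⟨a, haB, ⟨v, hav⟩, hR⟩ := hpe.exists_eq_insert hcard (P := liftProfile e B σ)
    (fun v => subset_union_left) hk
    (fun a haB => by
      by_cases ha : ∃ x, e x = a
      · obtain ⟨x, rfl⟩ := ha
        obtain ⟨v, hxv⟩ := hσ.2 x
        exact ⟨v, (apply_mem_liftProfile_iff heB).not.2 hxv⟩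
      · exact ⟨0, fun h => (hmem.1 h).elim haB fun ⟨x, _, hx⟩ => ha ⟨x, hx⟩⟩)
    (by
      obtain ⟨v, x, hx⟩ := hσ.1
      exact ⟨v, fun h => heB x (h ((apply_mem_liftProfile_iff heB).2 hx))⟩)
  obtain ⟨x, -, rfl⟩ := (hmem.1 hav).resolve_left haB
  exact ⟨x, hR⟩

theorem ParetoEfficient.not_paretoDominates (hpe : ParetoEfficient k R)
    (hcard : ∀ P, (R P).card = k) (heB : ∀ x, e x ∉ B) {σ : Profile3} {x : Fin 3}
    (hx : R (liftProfile e B σ) = insert (e x) B) (y : Fin 3) : ¬ σ.ParetoDominates y x := by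
  rintro ⟨hweak, v, hyv, hxv⟩
  refine hpe.not_exchange_improves hcard (heB x) (heB y) hx ⟨fun w => ?_, v, ?_⟩ <;>
    simp only [apply_mem_liftProfile_iff heB]
  exacts [hweak w, ⟨hyv, hxv⟩]

theorem StronglyGSP.not_isManipulation (hgsp : StronglyGSP R) (heB : ∀ x, e x ∉ B)
    {σ σ' : Profile3} {x x' : Fin 3} (hx : R (liftProfile e B σ) = insert (e x) B)
    (hx' : R (liftProfile e B σ') = insert (e x') B) : ¬ σ.IsManipulation σ' x x' := by
  rintro ⟨v₀, hx'v₀, hxv₀, hweak⟩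
  refine hgsp (liftProfile e B σ) (liftProfile e B σ') {v | σ v ≠ σ' v ∨ v = v₀}
    (fun v hv => ?_) ⟨fun v hv => ?_, v₀, by simp, ?_⟩
  · simp only [Finset.mem_filter, Finset.mem_univ, true_and, not_or, not_not] at hv
    simp [liftProfile, hv.1]
  · rw [hx, hx', hd_insert_le_hd_insert_iff _ (heB x) (heB x'), apply_mem_liftProfile_iff heB,
      apply_mem_liftProfile_iff heB]
    exact hweak v (by simpa using hv)
  · rw [hx, hx', hd_insert_lt_hd_insert_iff _ (heB x) (heB x'), apply_mem_liftProfile_iff heB,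
      apply_mem_liftProfile_iff heB]
    exact ⟨hx'v₀, hxv₀⟩

end Embedding

theorem no_sgsp_pareto_rule_three_voters {A : Type*} [DecidableEq A] {k : ℕ}
    {R : (Fin 3 → Finset A) → Finset A} (hcard : ∀ P, (R P).card = k) (hgsp : StronglyGSP R)
    (hpe : ParetoEfficient k R) {e : Fin 3 ↪ A} {B : Finset A} (heB : ∀ x, e x ∉ B)
    (hk : B.card + 1 = k) : False := by
  have hf (σ : Profile3) : ∃ x, σ.Admissible → R (liftProfile e B σ) = insert (e x) B := by
    by_cases hσ : σ.Admissible
    · exact (hpe.exists_eq_insert_liftProfile hcard heB hk hσ).imp fun _ h _ => h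
    · exact ⟨0, fun h => absurd h hσ⟩
  choose f hf using hf
  exact Profile3.false_of_isPareto_of_isSGSP (f := f)
    (fun σ hσ => hpe.not_paretoDominates hcard heB (hf σ hσ))
    (fun σ σ' hσ hσ' => hgsp.not_isManipulation heB (hf σ hσ) (hf σ' hσ'))

/-- For approval elections with `m ≥ 3` alternatives and committee size
`1 ≤ k ≤ m - 2`, no multi-winner approval-based voting rule (on elections with
`n ≥ 6` agents) is both strongly GSP and Pareto-efficient. -/
theorem no_sgsp_pareto_rule {A : Type*} [Fintype A] [DecidableEq A]
    {m n k : ℕ} (hmA : Fintype.card A = m) (hm : 3 ≤ m)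
    (hk1 : 1 ≤ k) (hk2 : k ≤ m - 2) (hn : 6 ≤ n) :
    ¬ ∃ R : (Fin n → Finset A) → Finset A,
        (∀ P, (R P).card = k) ∧ StronglyGSP R ∧ ParetoEfficient k R := by
  rintro ⟨R, hcard, hgsp, hpe⟩
  obtain ⟨e⟩ : Nonempty (Fin 3 ↪ A) :=
    Function.Embedding.nonempty_of_card_le (by rwa [Fintype.card_fin, hmA])
  obtain ⟨B, hBe, hB⟩ := exists_subset_card_eq (s := univ \ univ.map e) (n := k - 1) (by
    rw [card_sdiff_of_subset (subset_univ _), card_univ, card_map, card_univ, hmA,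
      Fintype.card_fin]
    omega)
  have heB (x : Fin 3) : e x ∉ B := fun hx =>
    (mem_sdiff.1 (hBe hx)).2 (mem_map_of_mem e (mem_univ x))
  have hπ : Surjective (invFun (Fin.castLE (show 3 ≤ n by omega))) :=
    invFun_surjective (Fin.castLE_injective _)
  exact no_sgsp_pareto_rule_three_voters (fun _ => hcard _) (hgsp.comp_surjective hπ)
    (hpe.comp_surjective hπ) heB (by omega)
end

section
/- Any non-unanimous multi-winner approval-based voting rule has infinite (unbounded) approximation ratio for k-minimax approval voting: for every ρ ≥ 1 there is a profile P with D(R(P),P) > ρ · min_K D(K,P), where the minimum is over size-k committees. -/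
/-- The minimax objective: the maximum Hamming distance of a committee `C`
from the ballots of profile `P`. -/
def Dmax {A : Type*} [DecidableEq A] {n : ℕ}
    (C : Finset A) (P : Fin n → Finset A) : ℕ :=
  Finset.univ.sup (fun i => hd C (P i))

/-
Take a size-`k` set `S` on which unanimity fails and let every agent approve `S`. Then `S` is a
committee at minimax distance `0`, whereas the rule's output differs from `S` and hence lies at
positive distance from every ballot; no factor `ρ` turns `0` into a bound for a positive number.
-/

theorem hd_eq_zero_iff {A : Type*} [DecidableEq A] {Q T : Finset A} : hd Q T = 0 ↔ Q = T := by
  simp only [hd, Nat.add_eq_zero_iff, Finset.card_eq_zero, Finset.sdiff_eq_empty_iff_subset]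
  exact ⟨fun h => h.1.antisymm h.2, fun h => ⟨h.le, h.ge⟩⟩

theorem Dmax_const {A : Type*} [DecidableEq A] {n : ℕ} (hn : 1 ≤ n) (C S : Finset A) :
    Dmax C (fun _ : Fin n => S) = hd C S :=
  Finset.sup_const ⟨⟨0, hn⟩, Finset.mem_univ _⟩ _

theorem nonunanimous_unbounded_minimax_general {A : Type*} [DecidableEq A]
    {n k : ℕ} (hn : 1 ≤ n)
    (R : (Fin n → Finset A) → Finset A)
    (hNonUnan : ¬ Unanimous k R) :
    ∀ ρ : ℝ, 1 ≤ ρ →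
      ∃ P : Fin n → Finset A,
        ∀ Kmin : Finset A, Kmin.card = k →
          (∀ K : Finset A, K.card = k → Dmax Kmin P ≤ Dmax K P) →
          (Dmax (R P) P : ℝ) > ρ * (Dmax Kmin P : ℝ) := by
  intro ρ _
  obtain ⟨S, hSk, hRS⟩ : ∃ S : Finset A, S.card = k ∧ R (fun _ => S) ≠ S := by
    simpa [Unanimous] using hNonUnan
  refine ⟨fun _ => S, fun Kmin _ hmin => ?_⟩
  have hKmin : Dmax Kmin (fun _ : Fin n => S) = 0 := by
    have hS : Dmax S (fun _ : Fin n => S) = 0 := by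
      rw [Dmax_const hn, hd_eq_zero_iff]
    exact Nat.eq_zero_of_le_zero (hS ▸ hmin S hSk)
  have hR : 0 < Dmax (R fun _ => S) (fun _ : Fin n => S) := by
    rw [Dmax_const hn, Nat.pos_iff_ne_zero, Ne, hd_eq_zero_iff]
    exact hRS
  rw [hKmin, Nat.cast_zero, mul_zero]
  exact_mod_cast hR

/-- A non-unanimous voting rule has an unbounded approximation ratio for
`k`-minimax approval voting: for every `ρ ≥ 1` there is a profile `P` such that
`D(R(P),P) > ρ · min_K D(K,P)`, the minimum being over size-`k` committees. -/
theorem nonunanimous_unbounded_minimax {A : Type*} [Fintype A] [DecidableEq A]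
    {n k : ℕ} (hn : 1 ≤ n) (hk : k ≤ Fintype.card A)
    (R : (Fin n → Finset A) → Finset A)
    (hNonUnan : ¬ Unanimous k R) :
    ∀ ρ : ℝ, 1 ≤ ρ →
      ∃ P : Fin n → Finset A,
        ∀ Kmin : Finset A, Kmin.card = k →
          (∀ K : Finset A, K.card = k → Dmax Kmin P ≤ Dmax K P) →
          (Dmax (R P) P : ℝ) > ρ * (Dmax Kmin P : ℝ) :=
  nonunanimous_unbounded_minimax_general hn R hNonUnan
end

section
/- For two agents, the serial dictatorship rule — which outputs the size-k committee of minimum Hamming distance from agent 2's ballot among all size-k committees of minimum Hamming distance from agent 1's ballot (ties broken by a fixed linear order) — is strongly group-strategyproof. -/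
/-!
The first dictator (agent `0`) already receives a committee closest to her true ballot, so she
can never gain. In a deviation that leaves no coalition member worse off her distance is therefore
unchanged: either she is in the coalition and may not lose, or she is not, and then her ballot is
unchanged and the new outcome is optimal for it as well. So the new outcome is again among her
closest committees, and among those the old outcome is already closest to agent `1`'s true ballot.
-/

theorem hd_first_eq_of_not_worse {A : Type*} [DecidableEq A] {k : ℕ}
    {R : (Fin 2 → Finset A) → Finset A} (hcard : ∀ P, (R P).card = k)
    (hmin1 : ∀ P K, K.card = k → hd (P 0) (R P) ≤ hd (P 0) K)
    {P P' : Fin 2 → Finset A} {S : Finset (Fin 2)} (hout : ∀ i, i ∉ S → P' i = P i)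
    (hle : 0 ∈ S → hd (P 0) (R P') ≤ hd (P 0) (R P)) :
    hd (P 0) (R P') = hd (P 0) (R P) := by
  refine le_antisymm ?_ (hmin1 P _ (hcard P'))
  by_cases h0 : (0 : Fin 2) ∈ S
  · exact hle h0
  · simpa only [hout 0 h0] using hmin1 P' (R P) (hcard P)

theorem serial_dictatorship_two_agents_sgsp_general
    {A : Type*} [DecidableEq A] {k : ℕ}
    (R : (Fin 2 → Finset A) → Finset A)
    (hcard : ∀ P, (R P).card = k)
    (hmin1 : ∀ P K, K.card = k → hd (P 0) (R P) ≤ hd (P 0) K)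
    (hmin2 : ∀ P K, K.card = k → hd (P 0) K = hd (P 0) (R P) →
      hd (P 1) (R P) ≤ hd (P 1) K) :
    StronglyGSP R := by
  rintro P P' S hout ⟨hall, i, -, hlt⟩
  have h0 : hd (P 0) (R P) ≤ hd (P 0) (R P') := hmin1 P _ (hcard P')
  have heq := hd_first_eq_of_not_worse hcard hmin1 hout (hall 0)
  have h1 : hd (P 1) (R P) ≤ hd (P 1) (R P') := hmin2 P _ (hcard P') heq
  fin_cases i
  · exact h0.not_gt hlt
  · exact h1.not_gt hlt

/-- For two agents, the serial dictatorship rule — outputting the size-`k`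
committee of minimum Hamming distance from agent 2's ballot among all size-`k`
committees of minimum Hamming distance from agent 1's ballot, with ties broken
by a fixed linear order `lo` — is strongly group-strategyproof. -/
theorem serial_dictatorship_two_agents_sgsp
    {A : Type*} [Fintype A] [DecidableEq A] {k : ℕ}
    (hk1 : 1 ≤ k) (hk : k ≤ Fintype.card A)
    (lo : LinearOrder (Finset A))
    (R : (Fin 2 → Finset A) → Finset A)
    (hcard : ∀ P, (R P).card = k)
    (hmin1 : ∀ P K, K.card = k → hd (P 0) (R P) ≤ hd (P 0) K)
    (hmin2 : ∀ P K, K.card = k → hd (P 0) K = hd (P 0) (R P) →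
      hd (P 1) (R P) ≤ hd (P 1) K)
    (htie : ∀ P K, K.card = k → hd (P 0) K = hd (P 0) (R P) →
      hd (P 1) K = hd (P 1) (R P) → lo.le (R P) K) :
    StronglyGSP R :=
  serial_dictatorship_two_agents_sgsp_general R hcard hmin1 hmin2
end

section
/- Suppose every agent's ranking profile has the same top alternative a ∈ A. Then in the corresponding approval election of the reduction (agents (i,j) approve the top j alternatives of ≻_i plus all k−1 dummies D), the unique Pareto-efficient size-k committee is D ∪ {a}. -/
/-- A size-`k` committee is Pareto-efficient for a given profile if no other
size-`k` committee weakly improves every agent and strictly improves some agent. -/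
def ParetoOptCommittee {A ι : Type*} [DecidableEq A] (k : ℕ)
    (P : ι → Finset A) (K : Finset A) : Prop :=
  K.card = k ∧
    ¬ ∃ K' : Finset A, K'.card = k ∧
      (∀ i, hd (P i) K' ≤ hd (P i) K) ∧
      (∃ i, hd (P i) K' < hd (P i) K)

section Committees

variable {A : Type*} [DecidableEq A]

lemma hd_eq_zero_iff_s18 {B K : Finset A} : hd B K = 0 ↔ B = K := by
  rw [hd, Nat.add_eq_zero_iff, Finset.card_eq_zero, Finset.card_eq_zero,
    Finset.sdiff_eq_empty_iff_subset, Finset.sdiff_eq_empty_iff_subset, Finset.Subset.antisymm_iff]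

lemma hd_of_subset {B K : Finset A} (h : K ⊆ B) : hd B K = B.card - K.card := by
  rw [hd, Finset.sdiff_eq_empty_iff_subset.mpr h, Finset.card_empty,
    Finset.card_sdiff_of_subset h, Nat.add_zero]

lemma card_sub_card_le_hd (B K : Finset A) : B.card - K.card ≤ hd B K := by
  have := Finset.le_card_sdiff K B
  rw [hd]
  omega

lemma hd_le_of_subset_of_card_eq {B K K' : Finset A} (h : K ⊆ B) (hc : K'.card = K.card) :
    hd B K ≤ hd B K' := by
  rw [hd_of_subset h, ← hc]
  exact card_sub_card_le_hd B K'

lemma paretoOptCommittee_iff_eq_of_subset {ι : Type*} {k : ℕ} {P : ι → Finset A}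
    {K : Finset A} (hK : K.card = k) (hsub : ∀ i, K ⊆ P i) (i₀ : ι) (hi₀ : P i₀ = K)
    (K' : Finset A) : ParetoOptCommittee k P K' ↔ K' = K := by
  constructor
  · rintro ⟨hK', hnot⟩
    by_contra hne
    refine hnot ⟨K, hK, fun i => hd_le_of_subset_of_card_eq (hsub i) (hK'.trans hK.symm), i₀, ?_⟩
    rw [hi₀, hd_eq_zero_iff_s18.mpr rfl, Nat.pos_iff_ne_zero, Ne, hd_eq_zero_iff_s18]
    exact fun h => hne h.symm
  · rintro rfl
    exact ⟨hK, fun ⟨K', hK', _, i, hlt⟩ =>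
      (hd_le_of_subset_of_card_eq (hsub i) (hK'.trans hK.symm)).not_gt hlt⟩

end Committees

section Reduction

variable {n m k : ℕ}

lemma card_insert_inl_dummies (hk : 1 ≤ k) (a : Fin m) :
    (insert (Sum.inl a) (dummies m k)).card = k := by
  rw [Finset.card_insert_of_notMem (by simp [dummies]), dummies,
    Finset.card_image_of_injective _ Sum.inr_injective, Finset.card_univ, Fintype.card_fin]
  omega

lemma insert_top_subset_redProfile (hm : 0 < m) (σ : Fin n → Equiv.Perm (Fin m))
    (p : Fin n × Fin (m - 1)) :
    insert (Sum.inl (σ p.1 ⟨0, hm⟩)) (dummies m k) ⊆ redProfile σ p :=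
  Finset.insert_subset (Finset.mem_union_left _ (Finset.mem_image_of_mem _ (by simp)))
    Finset.subset_union_right

lemma redProfile_mk_zero (hm : 0 < m) (σ : Fin n → Equiv.Perm (Fin m)) (i : Fin n)
    (h0 : 0 < m - 1) :
    redProfile σ (i, ⟨0, h0⟩) = insert (Sum.inl (σ i ⟨0, hm⟩)) (dummies m k) := by
  have hfilter : Finset.univ.filter (fun t : Fin m => t.val ≤ 0) = {⟨0, hm⟩} := by
    ext t
    simp [Fin.ext_iff]
  rw [redProfile, hfilter, Finset.image_singleton, Finset.insert_eq]

end Reduction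

/-- If every agent's ranking has the same top alternative `a`, then in the
corresponding approval election of the reduction the unique Pareto-efficient
size-`k` committee is `D ∪ {a}`. -/
theorem unanimous_top_unique_pareto {n m k : ℕ} (hn : 1 ≤ n) (hm : 2 ≤ m) (hk : 1 ≤ k)
    (σ : Fin n → Equiv.Perm (Fin m)) (a : Fin m)
    (htop : ∀ i : Fin n, σ i ⟨0, by omega⟩ = a) :
    ∀ K : Finset (Fin m ⊕ Fin (k - 1)),
      ParetoOptCommittee k (redProfile σ) K ↔ K = insert (Sum.inl a) (dummies m k) := by
  have hm0 : 0 < m := by omega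
  have hsub (p : Fin n × Fin (m - 1)) : insert (Sum.inl a) (dummies m k) ⊆ redProfile σ p :=
    htop p.1 ▸ insert_top_subset_redProfile hm0 σ p
  have hballot : redProfile σ (⟨0, hn⟩, ⟨0, by omega⟩) = insert (Sum.inl a) (dummies m k) :=
    htop ⟨0, hn⟩ ▸ redProfile_mk_zero hm0 σ _ _
  exact paretoOptCommittee_iff_eq_of_subset (card_insert_inl_dummies hk a) hsub _ hballot
end
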